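/- Let V and Q be real Hilbert spaces, a : V × V → ℝ and b : V × Q → ℝ bounded bilinear forms with a symmetric. Suppose (λ, σ, p) ∈ ℝ × V × Q with ‖p‖ = 1 satisfies a(σ,τ) + b(τ,p) = 0 for all τ ∈ V and b(σ,q) = -λ⟨p,q⟩ for all q ∈ Q, and (λ_h, σ_h, p_h) ∈ ℝ × V_h × Q_h with ‖p_h‖ = 1 satisfies the same equations restricted to closed subspaces V_h ⊆ V and Q_h ⊆ Q, where additionally b(τ, q) = ⟨Cτ, q⟩ for a bounded linear C : V → Q with C(V_h) ⊆ Q_h and p ∈ Q, p_h ∈ Q_h belong to the ranges so that Cσ = -λp and Cσ_h = -λ_h p_h, and a(τ,τ') = ⟨τ,τ'⟩. Then λ - λ_h = ‖σ - σ_h‖² - λ_h ‖p - p_h‖². -/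
import Mathlib


open scoped RealInnerProductSpace

theorem stmt_3 {V Q : Type*}
    [NormedAddCommGroup V] [InnerProductSpace ℝ V] [CompleteSpace V]
    [NormedAddCommGroup Q] [InnerProductSpace ℝ Q] [CompleteSpace Q]
    (C : V →L[ℝ] Q) (Vh : Submodule ℝ V) (Qh : Submodule ℝ Q)
    (hVh : IsClosed (Vh : Set V)) (hQh : IsClosed (Qh : Set Q))
    (hCVh : ∀ τ ∈ Vh, C τ ∈ Qh)
    (lam lamh : ℝ) (σ : V) (p : Q) (σh : V) (ph : Q)
    (hσh : σh ∈ Vh) (hph : ph ∈ Qh)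
    (hpnorm : ‖p‖ = 1) (hphnorm : ‖ph‖ = 1)
    (heq1 : ∀ τ : V, ⟪σ, τ⟫ + ⟪C τ, p⟫ = 0)
    (heq2 : ∀ q : Q, ⟪C σ, q⟫ = -lam * ⟪p, q⟫)
    (heq1h : ∀ τ ∈ Vh, ⟪σh, τ⟫ + ⟪C τ, ph⟫ = 0)
    (heq2h : ∀ q ∈ Qh, ⟪C σh, q⟫ = -lamh * ⟪ph, q⟫)
    (hCσ : C σ = -(lam • p)) (hCσh : C σh = -(lamh • ph)) :
    lam - lamh = ‖σ - σh‖ ^ 2 - lamh * ‖p - ph‖ ^ 2 := by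
  have hpp : ⟪p, p⟫ = 1 := by
    rw [real_inner_self_eq_norm_sq, hpnorm]; norm_num
  have hphph : ⟪ph, ph⟫ = 1 := by
    rw [real_inner_self_eq_norm_sq, hphnorm]; norm_num
  have h1 : ⟪σ, σ⟫ = lam := by
    have := heq1 σ
    rw [hCσ, inner_neg_left, real_inner_smul_left, hpp] at this
    linarith
  have h2 : ⟪σh, σh⟫ = lamh := by
    have := heq1h σh hσh
    rw [hCσh, inner_neg_left, real_inner_smul_left, hphph] at this
    linarith
  have h3 : ⟪σ, σh⟫ = lamh * ⟪ph, p⟫ := by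
    have := heq1 σh
    rw [hCσh, inner_neg_left, real_inner_smul_left] at this
    linarith
  have e1 : ‖σ - σh‖ ^ 2 = ⟪σ, σ⟫ - 2 * ⟪σ, σh⟫ + ⟪σh, σh⟫ := by
    rw [← real_inner_self_eq_norm_sq]
    simp only [inner_sub_sub_self]
    rw [real_inner_comm σh σ]; ring
  have e2 : ‖p - ph‖ ^ 2 = 2 - 2 * ⟪ph, p⟫ := by
    rw [← real_inner_self_eq_norm_sq]
    simp only [inner_sub_sub_self]
    rw [real_inner_comm p ph, hpp, hphph]; ring
  rw [e1, e2, h1, h2, h3]; ring
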